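/- arXiv:2401.17576 — 8 statements merged into one kernel-verified Lean document; each statement's English description precedes it below -/
import Mathlib

section
/- Let k₁, k₂ > 0 and let f : ℝ → ℝ be a continuous function such that (i) sgn(x₁ − x₂)(f(x₁) − f(x₂)) ≤ k₁|x₁ − x₂| for all x₁, x₂ ≤ 0, and (ii) |f(x₁) − f(x₂)| ≤ k₂|x₁ − x₂| for all x₁, x₂ ≥ 0. Then for every x₁, x₂ ∈ ℝ and θ ∈ (0,1) with x₁ > θx₂, one has (f(x₁) − θ f(x₂))/(1−θ) ≤ (k₁ + k₂)·|(x₁ − θx₂)/(1−θ)| + (k₁ + k₂)|x₂| + f(x₂). -/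
/-! Put `K = k₁ + k₂`. Clearing the denominator `1 - θ`, the claim becomes
`f x₁ - f x₂ ≤ K * (x₁ - θ * x₂ + (1 - θ) * |x₂|)`, and the right-hand factor dominates
`|x₁ - x₂|`. If `x₂ ≤ x₁`, the one-sided bounds on `ℝ₋` and `ℝ₊` glue at `0` to
`f x₁ - f x₂ ≤ K * (x₁ - x₂)`; otherwise `θ * x₂ < x₁ < x₂` forces both points into `ℝ₊`,
where the Lipschitz bound applies. -/

section

variable {f : ℝ → ℝ} {k₁ k₂ : ℝ}

lemma sub_le_mul_sub_of_sgn_le (h₁ : ∀ x₁ x₂ : ℝ, x₁ ≤ 0 → x₂ ≤ 0 →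
      (if 0 < x₁ - x₂ then (1 : ℝ) else -1) * (f x₁ - f x₂) ≤ k₁ * |x₁ - x₂|)
    {x₁ x₂ : ℝ} (hx : x₂ ≤ x₁) (hx₁ : x₁ ≤ 0) :
    f x₁ - f x₂ ≤ k₁ * (x₁ - x₂) := by
  rcases hx.eq_or_lt with rfl | hlt
  · simp
  · have h := h₁ x₁ x₂ hx₁ (hx.trans hx₁)
    rwa [if_pos (sub_pos.2 hlt), one_mul, abs_of_pos (sub_pos.2 hlt)] at h

lemma sub_le_add_mul_sub_of_le (hk₁ : 0 ≤ k₁) (hk₂ : 0 ≤ k₂)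
    (hneg : ∀ x₁ x₂ : ℝ, x₂ ≤ x₁ → x₁ ≤ 0 → f x₁ - f x₂ ≤ k₁ * (x₁ - x₂))
    (hpos : ∀ x₁ x₂ : ℝ, 0 ≤ x₂ → x₂ ≤ x₁ → f x₁ - f x₂ ≤ k₂ * (x₁ - x₂))
    {x₁ x₂ : ℝ} (hx : x₂ ≤ x₁) :
    f x₁ - f x₂ ≤ (k₁ + k₂) * (x₁ - x₂) := by
  have hd : 0 ≤ x₁ - x₂ := sub_nonneg.2 hx
  rcases le_total x₁ 0 with hx₁ | hx₁
  · nlinarith [hneg x₁ x₂ hx hx₁]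
  rcases le_total 0 x₂ with hx₂ | hx₂
  · nlinarith [hpos x₁ x₂ hx₂ hx]
  · nlinarith [hneg 0 x₂ hx₂ le_rfl, hpos x₁ 0 le_rfl hx₁]

end

lemma abs_sub_le_of_mul_lt {x₁ x₂ θ : ℝ} (hθ₀ : 0 ≤ θ) (hθ₁ : θ ≤ 1) (hx : θ * x₂ < x₁) :
    |x₁ - x₂| ≤ x₁ - θ * x₂ + (1 - θ) * |x₂| := by
  have := abs_nonneg x₂
  rcases abs_cases (x₁ - x₂) with ⟨h, -⟩ | ⟨h, -⟩ <;> rw [h] <;>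
    cases abs_cases x₂ <;> nlinarith

theorem stmt_0_general
    (k₁ k₂ : ℝ) (hk₁ : 0 < k₁) (hk₂ : 0 < k₂)
    (f : ℝ → ℝ)
    (h₁ : ∀ x₁ x₂ : ℝ, x₁ ≤ 0 → x₂ ≤ 0 →
      (if 0 < x₁ - x₂ then (1 : ℝ) else -1) * (f x₁ - f x₂) ≤ k₁ * |x₁ - x₂|)
    (h₂ : ∀ x₁ x₂ : ℝ, 0 ≤ x₁ → 0 ≤ x₂ →
      |f x₁ - f x₂| ≤ k₂ * |x₁ - x₂|) :
    ∀ (x₁ x₂ θ : ℝ), 0 < θ → θ < 1 → θ * x₂ < x₁ →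
      (f x₁ - θ * f x₂) / (1 - θ) ≤
        (k₁ + k₂) * |(x₁ - θ * x₂) / (1 - θ)| + (k₁ + k₂) * |x₂| + f x₂ := by
  intro x₁ x₂ θ hθ₀ hθ₁ hx
  have hpos : ∀ x₁ x₂ : ℝ, 0 ≤ x₂ → x₂ ≤ x₁ → f x₁ - f x₂ ≤ k₂ * (x₁ - x₂) :=
    fun x₁ x₂ hx₂ hle => by
      simpa [abs_of_nonneg (sub_nonneg.2 hle)] using
        (le_abs_self _).trans (h₂ x₁ x₂ (hx₂.trans hle) hx₂)
  have hdiff : f x₁ - f x₂ ≤ (k₁ + k₂) * |x₁ - x₂| := by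
    rcases le_total x₂ x₁ with hle | hlt
    · rw [abs_of_nonneg (sub_nonneg.2 hle)]
      exact sub_le_add_mul_sub_of_le hk₁.le hk₂.le
        (fun _ _ => sub_le_mul_sub_of_sgn_le h₁) hpos hle
    · have hx₁ : 0 ≤ x₁ := by nlinarith
      nlinarith [(le_abs_self _).trans (h₂ x₁ x₂ hx₁ (hx₁.trans hlt)), abs_nonneg (x₁ - x₂)]
  have hkey : f x₁ - f x₂ ≤ (k₁ + k₂) * (x₁ - θ * x₂ + (1 - θ) * |x₂|) :=
    hdiff.trans (mul_le_mul_of_nonneg_left (abs_sub_le_of_mul_lt hθ₀.le hθ₁.le hx) (by linarith))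
  have h1θ : 0 < 1 - θ := sub_pos.2 hθ₁
  rw [abs_of_pos (div_pos (by linarith) h1θ), div_le_iff₀ h1θ]
  field_simp
  nlinarith

/-- Lemma A.1: θ-difference inequality for a function satisfying a one-sided
monotonicity condition on ℝ₋ and a Lipschitz condition on ℝ₊.
Here `sgn x = 1` if `x > 0` and `-1` otherwise. -/
theorem stmt_0
    (k₁ k₂ : ℝ) (hk₁ : 0 < k₁) (hk₂ : 0 < k₂)
    (f : ℝ → ℝ) (hf : Continuous f)
    (h₁ : ∀ x₁ x₂ : ℝ, x₁ ≤ 0 → x₂ ≤ 0 →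
      (if 0 < x₁ - x₂ then (1 : ℝ) else -1) * (f x₁ - f x₂) ≤ k₁ * |x₁ - x₂|)
    (h₂ : ∀ x₁ x₂ : ℝ, 0 ≤ x₁ → 0 ≤ x₂ →
      |f x₁ - f x₂| ≤ k₂ * |x₁ - x₂|) :
    ∀ (x₁ x₂ θ : ℝ), 0 < θ → θ < 1 → θ * x₂ < x₁ →
      (f x₁ - θ * f x₂) / (1 - θ) ≤
        (k₁ + k₂) * |(x₁ - θ * x₂) / (1 - θ)| + (k₁ + k₂) * |x₂| + f x₂ :=
  stmt_0_general k₁ k₂ hk₁ hk₂ f h₁ h₂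
end

section
/- Let a ≥ 0, k > 0, let φ : [0,∞) → [0,∞) be a nondecreasing continuous function, and let f : ℝ → ℝ be a continuous function with |f(x)| ≤ φ(|x|) for all x ∈ ℝ. Assume: (i) |f(x₁) − f(x₂)| ≤ k|x₁ − x₂| for all x₁, x₂ ∈ [−a,a]; (ii) f is convex on (−∞,−a] and convex on [a,∞); (iii) the one-sided derivatives f′₋(−a) (the derivative of f at −a from within (−∞,−a]) and f′₊(a) (the derivative of f at a from within [a,∞)) exist and are finite. Set k₀ := max(|f′₋(−a)|, |f′₊(a)|, k). Then for all x₁, x₂ ∈ ℝ and θ ∈ (0,1): (f(x₁) − θ f(x₂))/(1−θ) ≤ φ(|(x₁ − θx₂)/(1−θ)| + 2a) + 2k₀·|(x₁ − θx₂)/(1−θ)| + 11k₀a + 22φ(a). -/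
/-!
Put `y := (x₁ - θ x₂) / (1 - θ)`, so that `x₁ = θ x₂ + (1 - θ) y`. It suffices that `f x₁` lies
below the chord from `(y, B)` to `(x₂, f x₂)`, where `B = φ |y| + k₀ (|y| + a) + φ a` no longer
involves `x₂`. The hypotheses are symmetric under `x ↦ -x`, so we may take `y ≤ x₂`. When the three
points lie in one tail this is convexity, and when `x₁, x₂ ∈ [-a, a]` it is the Lipschitz bound.
Every other configuration splits the chord at `-a` or `a`: lying below a chord passes to chords
sharing an endpoint, and for `x₂ ≥ a` the point `(a, f a)` lies below the chord from `(y, B)` to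
`(x₂, f x₂)` because the tangent to `f` at `a` has slope at least `-k₀`.
-/

open Set

theorem ConvexOn.sub_mul_apply_le {s : Set ℝ} {f : ℝ → ℝ} (hf : ConvexOn ℝ s f) {y v u b : ℝ}
    (hy : y ∈ s) (hu : u ∈ s) (hyv : y ≤ v) (hvu : v ≤ u) (hb : f y ≤ b) :
    (u - y) * f v ≤ (u - v) * b + (v - y) * f u := by
  rcases hyv.eq_or_lt with rfl | hyv
  · nlinarith
  rcases hvu.eq_or_lt with rfl | hvu
  · nlinarith
  nlinarith [hf.secant_mono_aux1 hy hu hyv hvu]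

theorem ConvexOn.add_mul_sub_le_of_hasDerivWithinAt {S : Set ℝ} {f : ℝ → ℝ} {x y d : ℝ}
    (hf : ConvexOn ℝ S f) (hx : x ∈ S) (hy : y ∈ S) (hd : HasDerivWithinAt f d S x) :
    f x + d * (y - x) ≤ f y := by
  rcases lt_trichotomy x y with hxy | rfl | hyx
  · have := hf.le_slope_of_hasDerivWithinAt hx hy hxy hd
    rw [slope_def_field, le_div_iff₀ (sub_pos.2 hxy)] at this
    linarith
  · simp
  · have := hf.slope_le_of_hasDerivWithinAt hy hx hyx hd
    rw [slope_def_field, div_le_iff₀ (sub_pos.2 hyx)] at this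
    linarith

/-! `(u - y) * w ≤ (u - v) * b + (v - y) * z` with `y ≤ v ≤ u` says that the point `(v, w)` lies on
or below the segment from `(y, b)` to `(u, z)`. -/

section Chord

variable {y v p u b c w z K : ℝ}

theorem chord_le_trans_left (hyv : y ≤ v) (hyp : y < p) (hyu : y ≤ u)
    (hv : (p - y) * w ≤ (p - v) * b + (v - y) * c)
    (hp : (u - y) * c ≤ (u - p) * b + (p - y) * z) :
    (u - y) * w ≤ (u - v) * b + (v - y) * z := by
  have key : (p - y) * ((u - y) * w) ≤ (p - y) * ((u - v) * b + (v - y) * z) := by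
    nlinarith [mul_le_mul_of_nonneg_left hv (sub_nonneg.2 hyu),
      mul_le_mul_of_nonneg_left hp (sub_nonneg.2 hyv)]
  exact le_of_mul_le_mul_left key (sub_pos.2 hyp)

theorem chord_le_trans_right (hyu : y ≤ u) (hvu : v ≤ u) (hpu : p < u)
    (hv : (u - p) * w ≤ (u - v) * c + (v - p) * z)
    (hp : (u - y) * c ≤ (u - p) * b + (p - y) * z) :
    (u - y) * w ≤ (u - v) * b + (v - y) * z := by
  have key : (u - p) * ((u - y) * w) ≤ (u - p) * ((u - v) * b + (v - y) * z) := by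
    nlinarith [mul_le_mul_of_nonneg_left hv (sub_nonneg.2 hyu),
      mul_le_mul_of_nonneg_left hp (sub_nonneg.2 hvu)]
  exact le_of_mul_le_mul_left key (sub_pos.2 hpu)

theorem chord_le_of_tangent (hyp : y ≤ p) (hpu : p ≤ u) (hz : c - K * (u - p) ≤ z)
    (hb : c + K * (p - y) ≤ b) :
    (u - y) * c ≤ (u - p) * b + (p - y) * z := by
  nlinarith [mul_le_mul_of_nonneg_left hz (sub_nonneg.2 hyp),
    mul_le_mul_of_nonneg_left hb (sub_nonneg.2 hpu)]

end Chord

-- The one-sided derivatives at `±a` enter only through their tangent lines, of slopes in `[-K, K]`.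
structure TailConvex (f φ : ℝ → ℝ) (a K : ℝ) : Prop where
  a_nonneg : 0 ≤ a
  K_nonneg : 0 ≤ K
  monotoneOn : MonotoneOn φ (Ici 0)
  abs_apply_le : ∀ x, |f x| ≤ φ |x|
  abs_sub_le : ∀ x ∈ Icc (-a) a, ∀ y ∈ Icc (-a) a, |f x - f y| ≤ K * |x - y|
  convexOn_Iic : ConvexOn ℝ (Iic (-a)) f
  convexOn_Ici : ConvexOn ℝ (Ici a) f
  left_tangent_le : ∀ x ≤ -a, f (-a) - K * (-a - x) ≤ f x
  right_tangent_le : ∀ x ≥ a, f a - K * (x - a) ≤ f x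

namespace TailConvex

variable {f φ : ℝ → ℝ} {a K y v u θ : ℝ}

theorem comp_neg (h : TailConvex f φ a K) : TailConvex (fun x => f (-x)) φ a K where
  a_nonneg := h.a_nonneg
  K_nonneg := h.K_nonneg
  monotoneOn := h.monotoneOn
  abs_apply_le x := by simpa using h.abs_apply_le (-x)
  abs_sub_le x hx y hy := by
    have := h.abs_sub_le (-x) ⟨by linarith [hx.2], by linarith [hx.1]⟩
      (-y) ⟨by linarith [hy.2], by linarith [hy.1]⟩
    rwa [neg_sub_neg, abs_sub_comm y x] at this
  convexOn_Iic := by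
    convert h.convexOn_Ici.comp_linearMap (-LinearMap.id) using 1 <;> ext x <;> simp [le_neg]
  convexOn_Ici := by
    convert h.convexOn_Iic.comp_linearMap (-LinearMap.id) using 1 <;> ext x <;> simp
  left_tangent_le x hx := by
    have := h.right_tangent_le (-x) (by linarith)
    simp only [neg_neg]
    linarith
  right_tangent_le x hx := by
    have := h.left_tangent_le (-x) (by linarith)
    linarith

theorem of_hasDerivWithinAt {dm dp : ℝ} (ha : 0 ≤ a) (hφ : MonotoneOn φ (Ici 0))
    (hf : ∀ x, |f x| ≤ φ |x|)
    (hlip : ∀ x ∈ Icc (-a) a, ∀ y ∈ Icc (-a) a, |f x - f y| ≤ K * |x - y|)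
    (hl : ConvexOn ℝ (Iic (-a)) f) (hr : ConvexOn ℝ (Ici a) f)
    (hdm : HasDerivWithinAt f dm (Iic (-a)) (-a)) (hdp : HasDerivWithinAt f dp (Ici a) a)
    (hdmK : |dm| ≤ K) (hdpK : |dp| ≤ K) : TailConvex f φ a K where
  a_nonneg := ha
  K_nonneg := (abs_nonneg dm).trans hdmK
  monotoneOn := hφ
  abs_apply_le := hf
  abs_sub_le := hlip
  convexOn_Iic := hl
  convexOn_Ici := hr
  left_tangent_le x hx := by
    have := hl.add_mul_sub_le_of_hasDerivWithinAt self_mem_Iic hx hdm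
    nlinarith [(abs_le.1 hdmK).2]
  right_tangent_le x hx := by
    have := hr.add_mul_sub_le_of_hasDerivWithinAt self_mem_Ici hx hdp
    nlinarith [(abs_le.1 hdpK).1]

theorem majorant_abs_nonneg (h : TailConvex f φ a K) (x : ℝ) : 0 ≤ φ |x| :=
  (abs_nonneg _).trans (h.abs_apply_le x)

theorem majorant_nonneg (h : TailConvex f φ a K) : 0 ≤ φ a := by
  simpa [abs_of_nonneg h.a_nonneg] using h.majorant_abs_nonneg a

theorem apply_le_of_mem_Icc (h : TailConvex f φ a K) {x : ℝ} (hx : x ∈ Icc (-a) a) :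
    f x ≤ φ a :=
  (le_abs_self _).trans <| (h.abs_apply_le x).trans <|
    h.monotoneOn (abs_nonneg x) h.a_nonneg (abs_le.2 hx)

theorem apply_le_bound (h : TailConvex f φ a K) (y : ℝ) :
    f y ≤ φ |y| + K * (|y| + a) + φ a := by
  have := (le_abs_self _).trans (h.abs_apply_le y)
  nlinarith [mul_nonneg h.K_nonneg (add_nonneg (abs_nonneg y) h.a_nonneg), h.majorant_nonneg]

theorem tangent_le_bound (h : TailConvex f φ a K) (y : ℝ) :
    f a + K * (a - y) ≤ φ |y| + K * (|y| + a) + φ a := by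
  have := h.apply_le_of_mem_Icc ⟨by linarith [h.a_nonneg], le_rfl⟩
  nlinarith [mul_le_mul_of_nonneg_left (show a - y ≤ |y| + a by linarith [neg_abs_le y])
    h.K_nonneg, h.majorant_abs_nonneg y]

theorem chord_le_of_mem_Icc_of_mem_Icc (h : TailConvex f φ a K) (hu : u ∈ Icc (-a) a)
    (hv : v ∈ Icc (-a) a) (hyv : y ≤ v) (hvu : v ≤ u) :
    (u - y) * f v ≤ (u - v) * (φ |y| + K * (|y| + a) + φ a) + (v - y) * f u := by
  have hlip : f v - f u ≤ K * (u - v) := by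
    have := (abs_le.1 (h.abs_sub_le v hv u hu)).2
    rwa [abs_of_nonpos (by linarith), neg_sub] at this
  have hdist : u - y ≤ |y| + a := by linarith [neg_abs_le y, hu.2]
  nlinarith [mul_le_mul_of_nonneg_left hlip (by linarith : 0 ≤ u - y),
    mul_le_mul_of_nonneg_right hdist (mul_nonneg h.K_nonneg (by linarith : 0 ≤ u - v)),
    mul_le_mul_of_nonneg_left (h.apply_le_of_mem_Icc hu) (by linarith : 0 ≤ u - v),
    mul_nonneg (by linarith : 0 ≤ u - v) (h.majorant_abs_nonneg y)]

theorem chord_le_of_mem_Icc (h : TailConvex f φ a K) (hu : u ∈ Icc (-a) a) (hyv : y ≤ v)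
    (hvu : v ≤ u) :
    (u - y) * f v ≤ (u - v) * (φ |y| + K * (|y| + a) + φ a) + (v - y) * f u := by
  rcases le_or_gt (-a) v with hav | hva
  · exact h.chord_le_of_mem_Icc_of_mem_Icc hu ⟨hav, hvu.trans hu.2⟩ hyv hvu
  · exact chord_le_trans_left hyv (hyv.trans_lt hva) (hyv.trans hvu)
      (h.convexOn_Iic.sub_mul_apply_le (hyv.trans hva.le) self_mem_Iic hyv hva.le
        (h.apply_le_bound y))
      (h.chord_le_of_mem_Icc_of_mem_Icc hu ⟨le_rfl, by linarith [hu.1, hu.2]⟩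
        (hyv.trans hva.le) hu.1)

theorem chord_le (h : TailConvex f φ a K) (hyv : y ≤ v) (hvu : v ≤ u) :
    (u - y) * f v ≤ (u - v) * (φ |y| + K * (|y| + a) + φ a) + (v - y) * f u := by
  rcases le_or_gt u (-a) with hu_le | hu_gt
  · exact h.convexOn_Iic.sub_mul_apply_le (hyv.trans (hvu.trans hu_le)) hu_le hyv hvu
      (h.apply_le_bound y)
  rcases le_or_gt u a with hu_le_a | ha_lt_u
  · exact h.chord_le_of_mem_Icc ⟨hu_gt.le, hu_le_a⟩ hyv hvu
  rcases le_or_gt a y with ha_le_y | hy_lt_a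
  · exact h.convexOn_Ici.sub_mul_apply_le ha_le_y ha_lt_u.le hyv hvu (h.apply_le_bound y)
  have htan := chord_le_of_tangent hy_lt_a.le ha_lt_u.le (h.right_tangent_le u ha_lt_u.le)
    (h.tangent_le_bound y)
  rcases le_or_gt v a with hv_le_a | ha_lt_v
  · exact chord_le_trans_left hyv hy_lt_a (hyv.trans hvu)
      (h.chord_le_of_mem_Icc ⟨by linarith [h.a_nonneg], le_rfl⟩ hyv hv_le_a) htan
  · exact chord_le_trans_right (hyv.trans hvu) hvu ha_lt_u
      (h.convexOn_Ici.sub_mul_apply_le self_mem_Ici ha_lt_u.le ha_lt_v.le hvu le_rfl) htan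

theorem apply_add_le_of_le (h : TailConvex f φ a K) (hyu : y ≤ u) (hθ₀ : 0 ≤ θ) (hθ₁ : θ ≤ 1) :
    f (θ * u + (1 - θ) * y) ≤ θ * f u + (1 - θ) * (φ |y| + K * (|y| + a) + φ a) := by
  rcases hyu.eq_or_lt with rfl | hyu
  · rw [show θ * y + (1 - θ) * y = y by ring]
    nlinarith [h.apply_le_bound y]
  have hyv : y ≤ θ * u + (1 - θ) * y := by nlinarith
  have hvu : θ * u + (1 - θ) * y ≤ u := by nlinarith
  have hc := h.chord_le hyv hvu
  refine le_of_mul_le_mul_left ?_ (sub_pos.2 hyu)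
  linarith

theorem apply_add_le (h : TailConvex f φ a K) (u y : ℝ) (hθ₀ : 0 ≤ θ) (hθ₁ : θ ≤ 1) :
    f (θ * u + (1 - θ) * y) ≤ θ * f u + (1 - θ) * (φ |y| + K * (|y| + a) + φ a) := by
  rcases le_total y u with hyu | huy
  · exact h.apply_add_le_of_le hyu hθ₀ hθ₁
  · have := h.comp_neg.apply_add_le_of_le (neg_le_neg huy) hθ₀ hθ₁
    rwa [show -(θ * -u + (1 - θ) * -y) = θ * u + (1 - θ) * y by ring, neg_neg, abs_neg] at this

end TailConvex

theorem stmt_1_general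
    (a k : ℝ) (ha : 0 ≤ a)
    (φ : ℝ → ℝ)
    (hφ_mono : ∀ x y : ℝ, 0 ≤ x → x ≤ y → φ x ≤ φ y)
    (f : ℝ → ℝ)
    (hf_bdd : ∀ x : ℝ, |f x| ≤ φ |x|)
    (hf_lip : ∀ x₁ x₂ : ℝ, x₁ ∈ Set.Icc (-a) a → x₂ ∈ Set.Icc (-a) a →
      |f x₁ - f x₂| ≤ k * |x₁ - x₂|)
    (hf_conv_left : ConvexOn ℝ (Set.Iic (-a)) f)
    (hf_conv_right : ConvexOn ℝ (Set.Ici a) f)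
    (dm dp : ℝ)
    (hdm : HasDerivWithinAt f dm (Set.Iic (-a)) (-a))
    (hdp : HasDerivWithinAt f dp (Set.Ici a) a)
    (k₀ : ℝ) (hk₀ : k₀ = max (max |dm| |dp|) k) :
    ∀ (x₁ x₂ θ : ℝ), 0 < θ → θ < 1 →
      (f x₁ - θ * f x₂) / (1 - θ) ≤
        φ (|(x₁ - θ * x₂) / (1 - θ)| + 2 * a)
          + 2 * k₀ * |(x₁ - θ * x₂) / (1 - θ)| + 11 * k₀ * a + 22 * φ a := by
  intro x₁ x₂ θ hθ₀ hθ₁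
  have hdm₀ : |dm| ≤ k₀ := hk₀ ▸ (le_max_left _ _).trans (le_max_left _ _)
  have hdp₀ : |dp| ≤ k₀ := hk₀ ▸ (le_max_right _ _).trans (le_max_left _ _)
  have hk : k ≤ k₀ := hk₀ ▸ le_max_right _ _
  have h : TailConvex f φ a k₀ :=
    .of_hasDerivWithinAt ha (fun x hx y _ hxy => hφ_mono x y hx hxy) hf_bdd
      (fun x hx y hy => (hf_lip x y hx hy).trans (by gcongr)) hf_conv_left hf_conv_right
      hdm hdp hdm₀ hdp₀
  set y := (x₁ - θ * x₂) / (1 - θ)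
  have hx₁ : θ * x₂ + (1 - θ) * y = x₁ := by
    rw [mul_div_cancel₀ _ (sub_pos.2 hθ₁).ne']
    ring
  have key := h.apply_add_le x₂ y hθ₀.le hθ₁.le
  rw [hx₁] at key
  have hφy : φ |y| ≤ φ (|y| + 2 * a) :=
    hφ_mono _ _ (abs_nonneg y) (by linarith)
  rw [div_le_iff₀ (sub_pos.2 hθ₁)]
  nlinarith [mul_nonneg h.K_nonneg (abs_nonneg y), mul_nonneg h.K_nonneg ha, h.majorant_nonneg]

/-- Lemma A.2: θ-difference inequality for a function that is Lipschitz on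
`[-a, a]`, convex on the two half-lines `(-∞, -a]` and `[a, ∞)`, has finite
one-sided derivatives at `-a` (from the left half-line) and at `a` (from the
right half-line), and is dominated by a nondecreasing function `φ`. -/
theorem stmt_1
    (a k : ℝ) (ha : 0 ≤ a) (hk : 0 < k)
    (φ : ℝ → ℝ)
    (hφ_nonneg : ∀ x : ℝ, 0 ≤ x → 0 ≤ φ x)
    (hφ_mono : ∀ x y : ℝ, 0 ≤ x → x ≤ y → φ x ≤ φ y)
    (hφ_cont : ContinuousOn φ (Set.Ici (0 : ℝ)))
    (f : ℝ → ℝ) (hf_cont : Continuous f)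
    (hf_bdd : ∀ x : ℝ, |f x| ≤ φ |x|)
    (hf_lip : ∀ x₁ x₂ : ℝ, x₁ ∈ Set.Icc (-a) a → x₂ ∈ Set.Icc (-a) a →
      |f x₁ - f x₂| ≤ k * |x₁ - x₂|)
    (hf_conv_left : ConvexOn ℝ (Set.Iic (-a)) f)
    (hf_conv_right : ConvexOn ℝ (Set.Ici a) f)
    (dm dp : ℝ)
    (hdm : HasDerivWithinAt f dm (Set.Iic (-a)) (-a))
    (hdp : HasDerivWithinAt f dp (Set.Ici a) a)
    (k₀ : ℝ) (hk₀ : k₀ = max (max |dm| |dp|) k) :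
    ∀ (x₁ x₂ θ : ℝ), 0 < θ → θ < 1 →
      (f x₁ - θ * f x₂) / (1 - θ) ≤
        φ (|(x₁ - θ * x₂) / (1 - θ)| + 2 * a)
          + 2 * k₀ * |(x₁ - θ * x₂) / (1 - θ)| + 11 * k₀ * a + 22 * φ a :=
  stmt_1_general a k ha φ hφ_mono f hf_bdd hf_lip hf_conv_left hf_conv_right dm dp hdm hdp k₀ hk₀
end

section
/- Let a ≥ 0, k > 0, let φ : [0,∞) → [0,∞) be a nondecreasing continuous function, and let f : ℝ → ℝ be a continuous function with |f(x)| ≤ φ(|x|) for all x ∈ ℝ. Assume: (i) |f(x₁) − f(x₂)| ≤ k|x₁ − x₂| for all x₁, x₂ ∈ ℝ; (ii) f is nonincreasing on (−∞,−a] and nondecreasing on [a,∞). Then for all x₁, x₂ ∈ ℝ and θ ∈ (0,1): (f(x₁) − θ f(x₂))/(1−θ) ≤ 4k·|(x₁ − θx₂)/(1−θ)| + 4ka + 11φ(a) + φ(|x₂|). -/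
/-!
Write `x₁ = θ x₂ + (1 - θ) y`. Since `f x₂ ≤ φ |x₂|`, it suffices to show
`f x₁ - f x₂ ≤ (1 - θ) k (|y| + a)`. For `|x₂| ≤ a` this is the Lipschitz bound. For `x₂ ≥ a`
compare `f x₁` with `f t`, where `t` is the point of `[a, x₂]` closest to `x₁`: monotonicity
gives `f t ≤ f x₂`, and `|x₁ - t| ≤ (1 - θ) (|y| + a)`. The case `x₂ ≤ -a` is the mirror image.
-/

open Set

section

variable {f : ℝ → ℝ} {a k θ : ℝ}

lemma nonneg_of_abs_sub_le_mul_abs_sub (hf : ∀ x₁ x₂, |f x₁ - f x₂| ≤ k * |x₁ - x₂|) :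
    0 ≤ k := by
  simpa using (abs_nonneg _).trans (hf 1 0)

lemma sub_le_of_abs_sub_le_mul_abs_sub (hf : ∀ x₁ x₂, |f x₁ - f x₂| ≤ k * |x₁ - x₂|)
    (x₁ x₂ : ℝ) : f x₁ - f x₂ ≤ k * |x₁ - x₂| :=
  (le_abs_self _).trans (hf x₁ x₂)

lemma convexComb_sub_le_of_abs_le (hf_lip : ∀ x₁ x₂, |f x₁ - f x₂| ≤ k * |x₁ - x₂|)
    (hθ1 : θ ≤ 1) {x : ℝ} (hx : |x| ≤ a) (y : ℝ) :
    f (θ * x + (1 - θ) * y) - f x ≤ (1 - θ) * (k * (|y| + a)) := by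
  have hk := nonneg_of_abs_sub_le_mul_abs_sub hf_lip
  have hdist : |θ * x + (1 - θ) * y - x| ≤ (1 - θ) * (|y| + a) := by
    rw [show θ * x + (1 - θ) * y - x = (1 - θ) * (y - x) by ring, abs_mul,
      abs_of_nonneg (sub_nonneg.2 hθ1)]
    exact mul_le_mul_of_nonneg_left ((abs_sub _ _).trans (by linarith)) (sub_nonneg.2 hθ1)
  calc f (θ * x + (1 - θ) * y) - f x ≤ k * |θ * x + (1 - θ) * y - x| :=
        sub_le_of_abs_sub_le_mul_abs_sub hf_lip _ _
    _ ≤ (1 - θ) * (k * (|y| + a)) := by linarith [mul_le_mul_of_nonneg_left hdist hk]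

lemma convexComb_sub_le_of_le (ha : 0 ≤ a) (hf_lip : ∀ x₁ x₂, |f x₁ - f x₂| ≤ k * |x₁ - x₂|)
    (hf_mono : MonotoneOn f (Ici a)) (hθ0 : 0 ≤ θ) (hθ1 : θ ≤ 1) {x : ℝ} (hx : a ≤ x)
    (y : ℝ) : f (θ * x + (1 - θ) * y) - f x ≤ (1 - θ) * (k * (|y| + a)) := by
  have hk := nonneg_of_abs_sub_le_mul_abs_sub hf_lip
  have hy := le_abs_self y
  have hy' := neg_abs_le y
  set z := θ * x + (1 - θ) * y with hz
  rcases le_total z a with hza | haz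
  · have hdist : a - z ≤ (1 - θ) * (|y| + a) := by
      nlinarith [mul_le_mul_of_nonneg_left hx hθ0]
    calc f z - f x ≤ f z - f a := by gcongr; exact hf_mono (le_refl a) hx hx
      _ ≤ k * |z - a| := sub_le_of_abs_sub_le_mul_abs_sub hf_lip _ _
      _ ≤ (1 - θ) * (k * (|y| + a)) := by
        rw [abs_of_nonpos (by linarith)]; linarith [mul_le_mul_of_nonneg_left hdist hk]
  rcases le_total z x with hzx | hxz
  · have hbound : 0 ≤ (1 - θ) * (k * (|y| + a)) :=
      mul_nonneg (sub_nonneg.2 hθ1) (mul_nonneg hk (by positivity))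
    linarith [hf_mono haz hx hzx]
  · have hdist : z - x ≤ (1 - θ) * (|y| + a) := by
      nlinarith [mul_le_mul_of_nonneg_left hx (sub_nonneg.2 hθ1)]
    calc f z - f x ≤ k * |z - x| := sub_le_of_abs_sub_le_mul_abs_sub hf_lip _ _
      _ ≤ (1 - θ) * (k * (|y| + a)) := by
        rw [abs_of_nonneg (by linarith)]; linarith [mul_le_mul_of_nonneg_left hdist hk]

lemma convexComb_sub_le_of_le_neg (ha : 0 ≤ a)
    (hf_lip : ∀ x₁ x₂, |f x₁ - f x₂| ≤ k * |x₁ - x₂|) (hf_anti : AntitoneOn f (Iic (-a)))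
    (hθ0 : 0 ≤ θ) (hθ1 : θ ≤ 1) {x : ℝ} (hx : x ≤ -a) (y : ℝ) :
    f (θ * x + (1 - θ) * y) - f x ≤ (1 - θ) * (k * (|y| + a)) := by
  have hg_lip : ∀ x₁ x₂, |f (-x₁) - f (-x₂)| ≤ k * |x₁ - x₂| := fun x₁ x₂ => by
    simpa only [neg_sub_neg, abs_sub_comm x₂] using hf_lip (-x₁) (-x₂)
  have hg_mono : MonotoneOn (fun t => f (-t)) (Ici a) := fun s hs t ht hst =>
    hf_anti (mem_Iic.2 (neg_le_neg ht)) (mem_Iic.2 (neg_le_neg hs)) (neg_le_neg hst)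
  have := convexComb_sub_le_of_le ha hg_lip hg_mono hθ0 hθ1 (le_neg_of_le_neg hx) (-y)
  rwa [neg_neg, abs_neg, show -(θ * -x + (1 - θ) * -y) = θ * x + (1 - θ) * y by ring] at this

lemma convexComb_sub_le (ha : 0 ≤ a) (hf_lip : ∀ x₁ x₂, |f x₁ - f x₂| ≤ k * |x₁ - x₂|)
    (hf_anti : AntitoneOn f (Iic (-a))) (hf_mono : MonotoneOn f (Ici a))
    (hθ0 : 0 ≤ θ) (hθ1 : θ ≤ 1) (x y : ℝ) :
    f (θ * x + (1 - θ) * y) - f x ≤ (1 - θ) * (k * (|y| + a)) := by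
  rcases le_total a x with hax | hxa
  · exact convexComb_sub_le_of_le ha hf_lip hf_mono hθ0 hθ1 hax y
  rcases le_total x (-a) with hxa' | hax'
  · exact convexComb_sub_le_of_le_neg ha hf_lip hf_anti hθ0 hθ1 hxa' y
  · exact convexComb_sub_le_of_abs_le hf_lip hθ1 (abs_le.2 ⟨hax', hxa⟩) y

end

theorem stmt_2_general
    (a k : ℝ) (ha : 0 ≤ a)
    (φ : ℝ → ℝ)
    (f : ℝ → ℝ)
    (hf_bdd : ∀ x : ℝ, |f x| ≤ φ |x|)
    (hf_lip : ∀ x₁ x₂ : ℝ, |f x₁ - f x₂| ≤ k * |x₁ - x₂|)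
    (hf_anti : AntitoneOn f (Set.Iic (-a)))
    (hf_mono' : MonotoneOn f (Set.Ici a)) :
    ∀ (x₁ x₂ θ : ℝ), 0 < θ → θ < 1 →
      (f x₁ - θ * f x₂) / (1 - θ) ≤
        4 * k * |(x₁ - θ * x₂) / (1 - θ)| + 4 * k * a + 11 * φ a + φ |x₂| := by
  intro x₁ x₂ θ hθ0 hθ1
  have hθ' : 0 < 1 - θ := sub_pos.2 hθ1
  set y := (x₁ - θ * x₂) / (1 - θ) with hy
  have hx₁ : x₁ = θ * x₂ + (1 - θ) * y := by rw [hy]; field_simp; ring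
  have hk := nonneg_of_abs_sub_le_mul_abs_sub hf_lip
  have hφa : 0 ≤ φ a := by simpa [abs_of_nonneg ha] using (abs_nonneg _).trans (hf_bdd a)
  have hfx₂ : f x₂ ≤ φ |x₂| := (le_abs_self _).trans (hf_bdd x₂)
  have hmain := convexComb_sub_le ha hf_lip hf_anti hf_mono' hθ0.le hθ1.le x₂ y
  rw [← hx₁] at hmain
  rw [div_le_iff₀ hθ']
  have hslack : 0 ≤ (1 - θ) * (3 * k * |y| + 3 * k * a + 11 * φ a) := by positivity
  linarith [mul_le_mul_of_nonneg_left hfx₂ hθ'.le]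

/-- Lemma A.3: θ-difference inequality for a globally Lipschitz function that is
nonincreasing on `(-∞, -a]` and nondecreasing on `[a, ∞)`, and dominated by a
nondecreasing function `φ`. -/
theorem stmt_2
    (a k : ℝ) (ha : 0 ≤ a) (hk : 0 < k)
    (φ : ℝ → ℝ)
    (hφ_nonneg : ∀ x : ℝ, 0 ≤ x → 0 ≤ φ x)
    (hφ_mono : ∀ x y : ℝ, 0 ≤ x → x ≤ y → φ x ≤ φ y)
    (hφ_cont : ContinuousOn φ (Set.Ici (0 : ℝ)))
    (f : ℝ → ℝ) (hf_cont : Continuous f)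
    (hf_bdd : ∀ x : ℝ, |f x| ≤ φ |x|)
    (hf_lip : ∀ x₁ x₂ : ℝ, |f x₁ - f x₂| ≤ k * |x₁ - x₂|)
    (hf_anti : AntitoneOn f (Set.Iic (-a)))
    (hf_mono' : MonotoneOn f (Set.Ici a)) :
    ∀ (x₁ x₂ θ : ℝ), 0 < θ → θ < 1 →
      (f x₁ - θ * f x₂) / (1 - θ) ≤
        4 * k * |(x₁ - θ * x₂) / (1 - θ)| + 4 * k * a + 11 * φ a + φ |x₂| :=
  stmt_2_general a k ha φ f hf_bdd hf_lip hf_anti hf_mono'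
end

section
/- Let a ≥ 0, L > 0, M ≥ 0, and let h : ℝ → ℝ satisfy: |h(x₁) − h(x₂)| ≤ L|x₁ − x₂| for all x₁, x₂ ∈ ℝ; |h(x)| ≤ M for all x ∈ ℝ; and h(x) = 0 whenever |x| ≥ a. Then for all x₁, x₂ ∈ ℝ and θ ∈ (0,1): (h(x₁) − θ h(x₂))/(1−θ) ≤ L·|(x₁ − θx₂)/(1−θ)| + 5M + 2La. -/
/-!
Write `(h x₁ - θ h x₂)/(1 - θ)` as the Lipschitz quotient `(h x₁ - h (θ x₂))/(1 - θ)`, plus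
`(h (θ x₂) - h x₂)/(1 - θ)`, plus `h x₂ ≤ M`. The middle term is bounded by `4M + 2La` uniformly
in `θ`: for `θ ≤ 1/2` the numerator is at most `2M ≤ (1 - θ) 4M`; for `θ > 1/2` either
`|x₂| ≤ 2a`, and the Lipschitz bound gives `L (1 - θ) |x₂| ≤ (1 - θ) 2La`, or `|x₂| > 2a`, and then
`|θ x₂| > a` so both values of `h` vanish.
-/

section

variable {a L M : ℝ} {h : ℝ → ℝ}

theorem abs_comp_mul_sub_le_of_le_half (hbdd : ∀ x, |h x| ≤ M) {θ : ℝ} (hθ : θ ≤ 1 / 2)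
    (x : ℝ) : |h (θ * x) - h x| ≤ (1 - θ) * (4 * M) :=
  calc |h (θ * x) - h x| ≤ |h (θ * x)| + |h x| := abs_sub _ _
    _ ≤ 2 * M := by linarith [hbdd (θ * x), hbdd x]
    _ ≤ (1 - θ) * (4 * M) := by nlinarith [(abs_nonneg _).trans (hbdd 0)]

theorem abs_comp_mul_sub_le_of_half_lt (ha : 0 ≤ a)
    (hlip : ∀ x₁ x₂, |h x₁ - h x₂| ≤ L * |x₁ - x₂|) (hsupp : ∀ x, a ≤ |x| → h x = 0)
    {θ : ℝ} (hθ : 1 / 2 < θ) (hθ₁ : θ ≤ 1) (x : ℝ) :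
    |h (θ * x) - h x| ≤ (1 - θ) * (2 * L * a) := by
  have hL : 0 ≤ L := by simpa using (abs_nonneg _).trans (hlip 1 0)
  rcases le_or_gt |x| (2 * a) with hx | hx
  · calc |h (θ * x) - h x| ≤ L * |θ * x - x| := hlip _ _
      _ = (1 - θ) * (L * |x|) := by
        rw [show θ * x - x = -((1 - θ) * x) by ring, abs_neg, abs_mul,
          abs_of_nonneg (by linarith : 0 ≤ 1 - θ)]
        ring
      _ ≤ (1 - θ) * (2 * L * a) :=
        mul_le_mul_of_nonneg_left (by linarith [mul_le_mul_of_nonneg_left hx hL]) (by linarith)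
  · have hθx : a ≤ |θ * x| := by
      rw [abs_mul, abs_of_pos (by linarith : 0 < θ)]
      nlinarith [abs_nonneg x]
    rw [hsupp x (by linarith), hsupp _ hθx, sub_self, abs_zero]
    exact mul_nonneg (by linarith) (by positivity)

theorem abs_comp_mul_sub_le (ha : 0 ≤ a)
    (hlip : ∀ x₁ x₂, |h x₁ - h x₂| ≤ L * |x₁ - x₂|) (hbdd : ∀ x, |h x| ≤ M)
    (hsupp : ∀ x, a ≤ |x| → h x = 0) {θ : ℝ} (hθ₁ : θ ≤ 1) (x : ℝ) :
    |h (θ * x) - h x| ≤ (1 - θ) * (4 * M + 2 * L * a) := by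
  have hM : 0 ≤ M := (abs_nonneg _).trans (hbdd 0)
  have hL : 0 ≤ L := by simpa using (abs_nonneg _).trans (hlip 1 0)
  have h1θ : 0 ≤ 1 - θ := by linarith
  rw [mul_add]
  rcases le_or_gt θ (1 / 2) with hθ | hθ
  · have := mul_nonneg h1θ (mul_nonneg (mul_nonneg zero_le_two hL) ha)
    linarith [abs_comp_mul_sub_le_of_le_half hbdd hθ x]
  · have := mul_nonneg h1θ (mul_nonneg zero_le_four hM)
    linarith [abs_comp_mul_sub_le_of_half_lt ha hlip hsupp hθ hθ₁ x]

end

theorem stmt_3_general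
    (a L M : ℝ) (ha : 0 ≤ a)
    (h : ℝ → ℝ)
    (hlip : ∀ x₁ x₂ : ℝ, |h x₁ - h x₂| ≤ L * |x₁ - x₂|)
    (hbdd : ∀ x : ℝ, |h x| ≤ M)
    (hsupp : ∀ x : ℝ, a ≤ |x| → h x = 0) :
    ∀ (x₁ x₂ θ : ℝ), 0 < θ → θ < 1 →
      (h x₁ - θ * h x₂) / (1 - θ) ≤
        L * |(x₁ - θ * x₂) / (1 - θ)| + 5 * M + 2 * L * a := by
  intro x₁ x₂ θ _ hθ₁
  have h1θ : 0 < 1 - θ := by linarith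
  have hdecomp : (h x₁ - θ * h x₂) / (1 - θ) =
      (h x₁ - h (θ * x₂)) / (1 - θ) + (h (θ * x₂) - h x₂) / (1 - θ) + h x₂ := by
    field_simp
    ring
  have hquot : (h x₁ - h (θ * x₂)) / (1 - θ) ≤ L * |(x₁ - θ * x₂) / (1 - θ)| := by
    rw [abs_div, abs_of_pos h1θ, ← mul_div_assoc]
    gcongr
    exact (le_abs_self _).trans (hlip _ _)
  have hdil : (h (θ * x₂) - h x₂) / (1 - θ) ≤ 4 * M + 2 * L * a := by
    rw [div_le_iff₀ h1θ]
    linarith [le_abs_self (h (θ * x₂) - h x₂), abs_comp_mul_sub_le ha hlip hbdd hsupp hθ₁.le x₂]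
  linarith [(abs_le.mp (hbdd x₂)).2]

/-- Inequality (A.11): the θ-difference estimate for a bounded, compactly
supported Lipschitz perturbation `h`. -/
theorem stmt_3
    (a L M : ℝ) (ha : 0 ≤ a) (hL : 0 < L) (hM : 0 ≤ M)
    (h : ℝ → ℝ)
    (hlip : ∀ x₁ x₂ : ℝ, |h x₁ - h x₂| ≤ L * |x₁ - x₂|)
    (hbdd : ∀ x : ℝ, |h x| ≤ M)
    (hsupp : ∀ x : ℝ, a ≤ |x| → h x = 0) :
    ∀ (x₁ x₂ θ : ℝ), 0 < θ → θ < 1 →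
      (h x₁ - θ * h x₂) / (1 - θ) ≤
        L * |(x₁ - θ * x₂) / (1 - θ)| + 5 * M + 2 * L * a :=
  stmt_3_general a L M ha h hlip hbdd hsupp
end

section
/- Let α ∈ (1,2), α* := α/(α−1), and set k_α := exp(α*/2). Then the function x ↦ [ln(k_α + x)]^{α*/2} is concave on [0, ∞). -/
/-!
With `L = log t`, the second derivative of `t ↦ L ^ p` is `p L^(p-2) (p - 1 - L) / t²`, which is
nonpositive as soon as `L ≥ p - 1`. Choosing `k = exp (α*/2)` makes `log (k + x) ≥ α*/2` for
`x ≥ 0`, so the function of the theorem is a translate of one that is concave on `[k, ∞)`.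
-/

open Real Set

lemma hasDerivAt_log_rpow (p : ℝ) {t : ℝ} (ht : 1 < t) :
    HasDerivAt (fun t => log t ^ p) (p * log t ^ (p - 1) / t) t := by
  have hlog := (hasDerivAt_log (by positivity : t ≠ 0)).rpow_const (p := p)
    (Or.inl (log_pos ht).ne')
  convert hlog using 1
  ring

lemma hasDerivAt_deriv_log_rpow (p : ℝ) {t : ℝ} (ht : 1 < t) :
    HasDerivAt (fun t => p * log t ^ (p - 1) / t)
      (p * log t ^ (p - 2) * (p - 1 - log t) / t ^ 2) t := by
  have ht0 : t ≠ 0 := by positivity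
  have hL : 0 < log t := log_pos ht
  have h := ((hasDerivAt_log ht0).rpow_const (p := p - 1) (Or.inl hL.ne')).const_mul p
    |>.div (hasDerivAt_id t) ht0
  refine h.congr_deriv ?_
  have hpow : log t ^ (p - 1) = log t ^ (p - 2) * log t := by
    rw [← rpow_add_one hL.ne']
    ring_nf
  rw [id, hpow, show p - 1 - 1 = p - 2 by ring]
  field_simp

lemma concaveOn_log_rpow {p c : ℝ} (hp : 0 ≤ p) (hc : 1 < c) (hpc : p - 1 ≤ log c) :
    ConcaveOn ℝ (Ici c) (fun t => log t ^ p) := by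
  have hgt : ∀ t ∈ Ici c, 1 < t := fun t ht => hc.trans_le ht
  refine concaveOn_of_hasDerivWithinAt2_nonpos (convex_Ici c)
    (fun t ht => (hasDerivAt_log_rpow p (hgt t ht)).continuousAt.continuousWithinAt)
    (fun t ht => (hasDerivAt_log_rpow p (hgt t (interior_subset ht))).hasDerivWithinAt)
    (fun t ht => (hasDerivAt_deriv_log_rpow p (hgt t (interior_subset ht))).hasDerivWithinAt)
    (fun t ht => ?_)
  replace ht : c ≤ t := interior_subset ht
  have hL : p - 1 ≤ log t := hpc.trans (log_le_log (by linarith) ht)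
  have : 0 ≤ p * log t ^ (p - 2) := mul_nonneg hp (rpow_nonneg (log_pos (hgt t ht)).le _)
  exact div_nonpos_of_nonpos_of_nonneg (mul_nonpos_of_nonneg_of_nonpos this (by linarith))
    (sq_nonneg t)

/-- Concavity of `x ↦ [ln(k_α + x)]^{α*/2}` on `[0, ∞)`, where
`k_α = exp(α*/2)`; used in Step 1 of the proof of Theorem 4.2. -/
theorem stmt_7
    (α αs : ℝ) (hα : α ∈ Set.Ioo (1 : ℝ) 2) (hαs : αs = α / (α - 1)) :
    ConcaveOn ℝ (Set.Ici (0 : ℝ))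
      (fun x : ℝ => (Real.log (Real.exp (αs / 2) + x)) ^ (αs / 2)) := by
  have hαs0 : 0 < αs := hαs ▸ div_pos (by linarith [hα.1]) (by linarith [hα.1])
  have hc : 1 < exp (αs / 2) := one_lt_exp_iff.mpr (by linarith)
  have h := (concaveOn_log_rpow (p := αs / 2) (by linarith) hc (by rw [log_exp]; linarith))
    |>.translate_right (exp (αs / 2))
  rwa [preimage_const_add_Ici, sub_self] at h
end

section
/- Let α ∈ (1,2), α* := α/(α−1), and set k_α := exp(α*/2). Let (X, 𝒜, μ) be a probability space and let h : X → [0,∞) be a measurable function that is integrable with respect to μ. Then ( ∫_X [ln(k_α + h)]^{α*/2} dμ )^{2/α*} ≤ ln( k_α + ∫_X h dμ ). -/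
/-!
With `p = α*/2 > 1` and `u = ln (k + t)`, the derivative of `t ↦ ln (k + t) ^ p` is
`p u^(p-1) e^(-u)`, and `u ↦ u^(p-1) e^(-u)` decreases once `u ≥ p - 1`, which holds for `t ≥ 0`
as soon as `k ≥ e^(p-1)`. So the function is concave on `[0, ∞)`, its tangent line at `0` dominates
it (giving integrability), and Jensen's inequality followed by taking `p`-th roots gives the claim.
-/

open MeasureTheory Real Set

lemma antitoneOn_rpow_mul_exp_neg {q : ℝ} (hq : 0 ≤ q) :
    AntitoneOn (fun u : ℝ => u ^ q * exp (-u)) (Ici q) := by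
  intro u hu v _ huv
  simp only [mem_Ici] at hu
  rcases hq.eq_or_lt with rfl | hq_pos
  · simpa using huv
  have hu_pos : 0 < u := hq_pos.trans_le hu
  have hv_pos : 0 < v := hu_pos.trans_le huv
  have hratio : (v / u) ^ q ≤ exp (v - u) := calc
    (v / u) ^ q = exp (log (v / u) * q) := rpow_def_of_pos (by positivity) q
    _ ≤ exp ((v / u - 1) * q) := by gcongr; exact log_le_sub_one_of_pos (by positivity)
    _ ≤ exp (v - u) := by
      gcongr
      rw [div_sub_one hu_pos.ne', div_mul_eq_mul_div, div_le_iff₀ hu_pos]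
      nlinarith
  calc v ^ q * exp (-v) = u ^ q * (v / u) ^ q * exp (-v) := by
        rw [← mul_rpow hu_pos.le (by positivity), mul_div_cancel₀ _ hu_pos.ne']
    _ ≤ u ^ q * exp (v - u) * exp (-v) := by gcongr
    _ = u ^ q * exp (-u) := by rw [mul_assoc, ← exp_add]; ring_nf

lemma ConcaveOn.le_add_mul_sub_of_hasDerivAt {S : Set ℝ} {f : ℝ → ℝ} {f' x y : ℝ}
    (hfc : ConcaveOn ℝ S f) (hx : x ∈ S) (hy : y ∈ S) (hf : HasDerivAt f f' x) :
    f y ≤ f x + f' * (y - x) := by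
  rcases lt_trichotomy x y with hxy | rfl | hyx
  · have := hfc.slope_le_of_hasDerivAt hx hy hxy hf
    rw [slope_def_field, div_le_iff₀ (sub_pos.2 hxy)] at this
    linarith
  · simp
  · have := hfc.le_slope_of_hasDerivAt hy hx hyx hf
    rw [slope_def_field, le_div_iff₀ (sub_pos.2 hyx)] at this
    linarith

theorem ConcaveOn.le_map_integral_of_nonneg_of_hasDerivAt {X : Type*} [MeasurableSpace X]
    {μ : Measure X} [IsProbabilityMeasure μ] {φ : ℝ → ℝ} {φ' a : ℝ} {f : X → ℝ}
    (hφ : ConcaveOn ℝ (Ici a) φ) (hφc : ContinuousOn φ (Ici a)) (hφm : Measurable φ)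
    (hφ_nonneg : ∀ t ∈ Ici a, 0 ≤ φ t) (hφ' : HasDerivAt φ φ' a)
    (hf : ∀ x, f x ∈ Ici a) (hfi : Integrable f μ) :
    ∫ x, φ (f x) ∂μ ≤ φ (∫ x, f x ∂μ) := by
  have hφf : Integrable (φ ∘ f) μ := by
    refine Integrable.mono'
      ((integrable_const (φ a)).add ((hfi.sub (integrable_const a)).const_mul φ'))
      (hφm.comp_aemeasurable hfi.aemeasurable).aestronglyMeasurable (ae_of_all _ fun x => ?_)
    rw [Function.comp_apply, norm_of_nonneg (hφ_nonneg _ (hf x))]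
    exact hφ.le_add_mul_sub_of_hasDerivAt self_mem_Ici (hf x) hφ'
  exact hφ.le_map_integral hφc isClosed_Ici (ae_of_all _ hf) hfi hφf

section LogAddRpow

variable {p k : ℝ}

lemma sub_one_le_log_add (hk : exp (p - 1) ≤ k) {t : ℝ} (ht : 0 ≤ t) :
    p - 1 ≤ log (k + t) := by
  rw [le_log_iff_exp_le (by linarith [exp_pos (p - 1)])]
  linarith

lemma log_add_nonneg (hp : 1 ≤ p) (hk : exp (p - 1) ≤ k) {t : ℝ} (ht : 0 ≤ t) :
    0 ≤ log (k + t) :=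
  (sub_nonneg.2 hp).trans (sub_one_le_log_add hk ht)

lemma hasDerivAt_log_add_rpow (hp : 1 ≤ p) (hk : exp (p - 1) ≤ k) {t : ℝ} (ht : 0 ≤ t) :
    HasDerivAt (fun s => log (k + s) ^ p)
      (p * (log (k + t) ^ (p - 1) * exp (-log (k + t)))) t := by
  have hkt : 0 < k + t := by linarith [exp_pos (p - 1)]
  have := ((hasDerivAt_id t).const_add k).log hkt.ne' |>.rpow_const (p := p) (Or.inr hp)
  convert this using 1
  · simp
  rw [exp_neg, exp_log hkt, id]
  ring

lemma concaveOn_log_add_rpow (hp : 1 ≤ p) (hk : exp (p - 1) ≤ k) :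
    ConcaveOn ℝ (Ici 0) (fun t => log (k + t) ^ p) := by
  have hderiv : ∀ t ∈ Ici (0 : ℝ), HasDerivAt (fun s => log (k + s) ^ p)
      (p * (log (k + t) ^ (p - 1) * exp (-log (k + t)))) t :=
    fun t ht => hasDerivAt_log_add_rpow hp hk ht
  refine AntitoneOn.concaveOn_of_deriv (convex_Ici 0)
    (fun t ht => (hderiv t ht).continuousAt.continuousWithinAt)
    (fun t ht => (hderiv t (interior_subset ht)).differentiableAt.differentiableWithinAt) ?_
  rw [interior_Ici]
  intro s (hs : 0 < s) t (ht : 0 < t) hst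
  rw [(hderiv s hs.le).deriv, (hderiv t ht.le).deriv]
  gcongr p * ?_
  exact antitoneOn_rpow_mul_exp_neg (by linarith) (sub_one_le_log_add hk hs.le)
    (sub_one_le_log_add hk ht.le) (log_le_log (by linarith [exp_pos (p - 1)]) (by linarith))

lemma integral_log_add_rpow_le (hp : 1 ≤ p) (hk : exp (p - 1) ≤ k) {X : Type*}
    [MeasurableSpace X] {μ : Measure X} [IsProbabilityMeasure μ] {f : X → ℝ}
    (hf : ∀ x, 0 ≤ f x) (hfi : Integrable f μ) :
    ∫ x, log (k + f x) ^ p ∂μ ≤ log (k + ∫ x, f x ∂μ) ^ p :=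
  (concaveOn_log_add_rpow hp hk).le_map_integral_of_nonneg_of_hasDerivAt
    (fun t ht => (hasDerivAt_log_add_rpow hp hk ht).continuousAt.continuousWithinAt)
    (by fun_prop)
    (fun t ht => rpow_nonneg (log_add_nonneg hp hk ht) p)
    (hasDerivAt_log_add_rpow hp hk le_rfl) hf hfi

end LogAddRpow

theorem stmt_8_general
    {X : Type*} [MeasurableSpace X] (μ : Measure X) [IsProbabilityMeasure μ]
    (α αs : ℝ) (hα : α ∈ Set.Ioo (1 : ℝ) 2) (hαs : αs = α / (α - 1))
    (h : X → ℝ) (hnonneg : ∀ x, 0 ≤ h x)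
    (hint : Integrable h μ) :
    (∫ x, (Real.log (Real.exp (αs / 2) + h x)) ^ (αs / 2) ∂μ) ^ (2 / αs) ≤
      Real.log (Real.exp (αs / 2) + ∫ x, h x ∂μ) := by
  obtain ⟨hα1, hα2⟩ := hα
  have hαs2 : 2 < αs := by
    rw [hαs, lt_div_iff₀ (by linarith)]
    linarith
  have hp : 1 ≤ αs / 2 := by linarith
  have hk : exp (αs / 2 - 1) ≤ exp (αs / 2) := exp_le_exp.2 (by linarith)
  rw [show 2 / αs = (αs / 2)⁻¹ from (inv_div αs 2).symm]
  calc (∫ x, log (exp (αs / 2) + h x) ^ (αs / 2) ∂μ) ^ (αs / 2)⁻¹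
      ≤ (log (exp (αs / 2) + ∫ x, h x ∂μ) ^ (αs / 2)) ^ (αs / 2)⁻¹ := by
        gcongr
        · exact integral_nonneg fun x =>
            rpow_nonneg (log_add_nonneg hp hk (hnonneg x)) _
        · exact integral_log_add_rpow_le hp hk hnonneg hint
    _ = log (exp (αs / 2) + ∫ x, h x ∂μ) :=
        rpow_rpow_inv (log_add_nonneg hp hk (integral_nonneg hnonneg)) (by positivity)

/-- The Jensen-inequality estimate from display (4.8) in the proof of
Theorem 4.2: for a probability measure `μ` and integrable `h ≥ 0`,
`(∫ [ln(k_α + h)]^{α*/2} dμ)^{2/α*} ≤ ln(k_α + ∫ h dμ)` with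
`k_α = exp(α*/2)`. -/
theorem stmt_8
    {X : Type*} [MeasurableSpace X] (μ : Measure X) [IsProbabilityMeasure μ]
    (α αs : ℝ) (hα : α ∈ Set.Ioo (1 : ℝ) 2) (hαs : αs = α / (α - 1))
    (h : X → ℝ) (hmeas : Measurable h) (hnonneg : ∀ x, 0 ≤ h x)
    (hint : Integrable h μ) :
    (∫ x, (Real.log (Real.exp (αs / 2) + h x)) ^ (αs / 2) ∂μ) ^ (2 / αs) ≤
      Real.log (Real.exp (αs / 2) + ∫ x, h x ∂μ) :=
  stmt_8_general μ α αs hα hαs h hnonneg hint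
end

section
/- Let α ∈ (1,2) and f, β, γ ≥ 0, and let g : ℝ × ℝ^d → ℝ satisfy the one-sided growth condition sgn(y)·g(y,z) ≤ f + β|y| + γ|z|^α for all (y,z) ∈ ℝ × ℝ^d. (a) If g is convex on ℝ × ℝ^d, then g satisfies the (5.1)-condition with constants f, β, γ; indeed, for all (y₁,z₁),(y₂,z₂) ∈ ℝ×ℝ^d and θ ∈ (0,1) with y₁ − θy₂ > 0, g(y₁,z₁) − θg(y₂,z₂) ≤ (1−θ)(f + β|δ_θy| + γ|δ_θz|^α). (b) If g is concave on ℝ × ℝ^d, then g satisfies the (5.2)-condition with constants f, β, γ; indeed, for all (y₁,z₁),(y₂,z₂) and θ ∈ (0,1) with y₁ − θy₂ < 0, −(g(y₁,z₁) − θg(y₂,z₂)) ≤ (1−θ)(f + β|δ_θy| + γ|δ_θz|^α). -/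
/-! Write `(y₁, z₁) = θ (y₂, z₂) + (1 - θ) (δ_θy, δ_θz)`. Convexity bounds
`g(y₁,z₁) - θ g(y₂,z₂)` by `(1 - θ) g(δ_θy, δ_θz)`, and since `δ_θy > 0` the growth
condition bounds `g(δ_θy, δ_θz)` from above. The concave case is the same argument
applied to `-g`, where `δ_θy < 0` makes the growth condition an upper bound on `-g`. -/

section ThetaDifference

variable {E : Type*} [AddCommGroup E] [Module ℝ E] {g : E → ℝ} {θ : ℝ}

theorem ConvexOn.sub_smul_le (hg : ConvexOn ℝ Set.univ g) (hθ₀ : 0 ≤ θ) (hθ₁ : θ < 1)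
    (x y : E) : g x - θ * g y ≤ (1 - θ) * g ((1 - θ)⁻¹ • (x - θ • y)) := by
  have hθ' : (1 - θ) ≠ 0 := by linarith
  have hx : θ • y + (1 - θ) • (1 - θ)⁻¹ • (x - θ • y) = x := by
    rw [smul_smul, mul_inv_cancel₀ hθ', one_smul, add_sub_cancel]
  have h := hg.2 (Set.mem_univ y) (Set.mem_univ ((1 - θ)⁻¹ • (x - θ • y))) hθ₀
    (show 0 ≤ 1 - θ by linarith) (by ring)
  rw [hx, smul_eq_mul, smul_eq_mul] at h
  linarith

theorem ConcaveOn.neg_sub_smul_le (hg : ConcaveOn ℝ Set.univ g) (hθ₀ : 0 ≤ θ) (hθ₁ : θ < 1)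
    (x y : E) : -(g x - θ * g y) ≤ (1 - θ) * -g ((1 - θ)⁻¹ • (x - θ • y)) := by
  have h := hg.neg.sub_smul_le hθ₀ hθ₁ x y
  simp only [Pi.neg_apply] at h
  linarith

end ThetaDifference

theorem stmt_13_general {d : ℕ}
    (α f β γ : ℝ)
    (g : ℝ → EuclideanSpace ℝ (Fin d) → ℝ)
    (hgrowth : ∀ (y : ℝ) (z : EuclideanSpace ℝ (Fin d)),
      (if 0 < y then (1 : ℝ) else -1) * g y z ≤ f + β * |y| + γ * ‖z‖ ^ α) :
    ((ConvexOn ℝ Set.univ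
        (fun p : ℝ × EuclideanSpace ℝ (Fin d) => g p.1 p.2)) →
      ∀ (y₁ y₂ : ℝ) (z₁ z₂ : EuclideanSpace ℝ (Fin d)) (θ : ℝ),
        0 < θ → θ < 1 → 0 < y₁ - θ * y₂ →
          g y₁ z₁ - θ * g y₂ z₂ ≤
            (1 - θ) * (f + β * |(y₁ - θ * y₂) / (1 - θ)|
              + γ * ‖(1 - θ)⁻¹ • (z₁ - θ • z₂)‖ ^ α)) ∧
    ((ConcaveOn ℝ Set.univ
        (fun p : ℝ × EuclideanSpace ℝ (Fin d) => g p.1 p.2)) →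
      ∀ (y₁ y₂ : ℝ) (z₁ z₂ : EuclideanSpace ℝ (Fin d)) (θ : ℝ),
        0 < θ → θ < 1 → y₁ - θ * y₂ < 0 →
          -(g y₁ z₁ - θ * g y₂ z₂) ≤
            (1 - θ) * (f + β * |(y₁ - θ * y₂) / (1 - θ)|
              + γ * ‖(1 - θ)⁻¹ • (z₁ - θ • z₂)‖ ^ α)) := by
  constructor
  · intro hconv y₁ y₂ z₁ z₂ θ hθ₀ hθ₁ hy
    have hdiff := hconv.sub_smul_le hθ₀.le hθ₁ (y₁, z₁) (y₂, z₂)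
    have hgδ := hgrowth ((y₁ - θ * y₂) / (1 - θ)) ((1 - θ)⁻¹ • (z₁ - θ • z₂))
    rw [if_pos (div_pos hy (by linarith)), one_mul] at hgδ
    simp only [Prod.smul_mk, Prod.mk_sub_mk, smul_eq_mul, inv_mul_eq_div] at hdiff
    exact hdiff.trans (mul_le_mul_of_nonneg_left hgδ (by linarith))
  · intro hconc y₁ y₂ z₁ z₂ θ hθ₀ hθ₁ hy
    have hdiff := hconc.neg_sub_smul_le hθ₀.le hθ₁ (y₁, z₁) (y₂, z₂)
    have hgδ := hgrowth ((y₁ - θ * y₂) / (1 - θ)) ((1 - θ)⁻¹ • (z₁ - θ • z₂))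
    rw [if_neg (div_neg_of_neg_of_pos hy (by linarith)).not_gt, neg_one_mul] at hgδ
    simp only [Prod.smul_mk, Prod.mk_sub_mk, smul_eq_mul, inv_mul_eq_div] at hdiff
    exact hdiff.trans (mul_le_mul_of_nonneg_left hgδ (by linarith))

/-- Part (i) of Proposition 5.1, stated pointwise: a convex (resp. concave)
generator with one-sided growth satisfies the (5.1)- (resp. (5.2)-) type
θ-difference inequality. Here `sgn y = 1` if `y > 0` and `-1` otherwise. -/
theorem stmt_13 {d : ℕ}
    (α f β γ : ℝ) (hα : α ∈ Set.Ioo (1 : ℝ) 2)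
    (hf : 0 ≤ f) (hβ : 0 ≤ β) (hγ : 0 ≤ γ)
    (g : ℝ → EuclideanSpace ℝ (Fin d) → ℝ)
    (hgrowth : ∀ (y : ℝ) (z : EuclideanSpace ℝ (Fin d)),
      (if 0 < y then (1 : ℝ) else -1) * g y z ≤ f + β * |y| + γ * ‖z‖ ^ α) :
    ((ConvexOn ℝ Set.univ
        (fun p : ℝ × EuclideanSpace ℝ (Fin d) => g p.1 p.2)) →
      ∀ (y₁ y₂ : ℝ) (z₁ z₂ : EuclideanSpace ℝ (Fin d)) (θ : ℝ),
        0 < θ → θ < 1 → 0 < y₁ - θ * y₂ →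
          g y₁ z₁ - θ * g y₂ z₂ ≤
            (1 - θ) * (f + β * |(y₁ - θ * y₂) / (1 - θ)|
              + γ * ‖(1 - θ)⁻¹ • (z₁ - θ • z₂)‖ ^ α)) ∧
    ((ConcaveOn ℝ Set.univ
        (fun p : ℝ × EuclideanSpace ℝ (Fin d) => g p.1 p.2)) →
      ∀ (y₁ y₂ : ℝ) (z₁ z₂ : EuclideanSpace ℝ (Fin d)) (θ : ℝ),
        0 < θ → θ < 1 → y₁ - θ * y₂ < 0 →
          -(g y₁ z₁ - θ * g y₂ z₂) ≤
            (1 - θ) * (f + β * |(y₁ - θ * y₂) / (1 - θ)|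
              + γ * ‖(1 - θ)⁻¹ • (z₁ - θ • z₂)‖ ^ α)) :=
  stmt_13_general α f β γ g hgrowth
end

section
/- Let α ∈ (1,2). Let l : ℝ → ℝ be bounded and Lipschitz continuous, and let q : ℝ^d → ℝ be bounded and Lipschitz continuous with bounded support (i.e., there exists R > 0 with q(z) = 0 whenever |z| > R). Define g(y,z) := l(y)·q(z). Then there exist nonnegative constants F, B, Γ (depending only on α, the bounds and Lipschitz constants of l and q, and R) such that g satisfies both the (5.1)-condition and the (5.2)-condition with constants F, B, Γ. -/
/-!
Write `l(y₁)q(z₁) - θ l(y₂)q(z₂) = q(z₁)(l(y₁) - θ l(y₂)) + θ l(y₂)(q(z₁) - q(z₂))`.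
The first factor is Lipschitz-controlled through `y₁ - y₂ = (1-θ)(δ_θy - y₂)`.
For the second, `θ |q(z₁) - q(z₂)|` is `O(1-θ)` when `θ ≤ 1/2` (boundedness), when `z₂` is
near the support (Lipschitz, with `|δ_θz| ≤ 1 + |δ_θz|^α`), and when both points are outside the
support (it vanishes). In the remaining case `z₂` is far and `z₁` is in the support, so
`(1-θ)|δ_θz| = |z₁ - θz₂| ≥ R`, and since `α ≥ 1` this gives `R^α ≤ (1-θ)|δ_θz|^α`.
-/

/-- The (5.1)-condition with constants `f, β, γ` for a generator
`g : ℝ × ℝ^d → ℝ` (stated pointwise). -/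
def Cond51 {d : ℕ} (α f β γ : ℝ) (g : ℝ → EuclideanSpace ℝ (Fin d) → ℝ) : Prop :=
  ∀ (y₁ y₂ : ℝ) (z₁ z₂ : EuclideanSpace ℝ (Fin d)) (θ : ℝ),
    0 < θ → θ < 1 → 0 < y₁ - θ * y₂ →
      g y₁ z₁ - θ * g y₂ z₂ ≤
        (1 - θ) * (f + β * |y₂| + β * |(y₁ - θ * y₂) / (1 - θ)|
          + γ * ‖(1 - θ)⁻¹ • (z₁ - θ • z₂)‖ ^ α)

/-- The (5.2)-condition with constants `f, β, γ`. -/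
def Cond52 {d : ℕ} (α f β γ : ℝ) (g : ℝ → EuclideanSpace ℝ (Fin d) → ℝ) : Prop :=
  ∀ (y₁ y₂ : ℝ) (z₁ z₂ : EuclideanSpace ℝ (Fin d)) (θ : ℝ),
    0 < θ → θ < 1 → y₁ - θ * y₂ < 0 →
      -(g y₁ z₁ - θ * g y₂ z₂) ≤
        (1 - θ) * (f + β * |y₂| + β * |(y₁ - θ * y₂) / (1 - θ)|
          + γ * ‖(1 - θ)⁻¹ • (z₁ - θ • z₂)‖ ^ α)

section

variable {E : Type*} [SeminormedAddCommGroup E] [NormedSpace ℝ E]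

lemma rpow_le_mul_rpow_of_le_mul {u x R α : ℝ} (hu₀ : 0 < u) (hu₁ : u ≤ 1) (hα : 1 ≤ α)
    (hR : 0 ≤ R) (h : R ≤ u * x) : R ^ α ≤ u * x ^ α := by
  have hx : 0 ≤ x := nonneg_of_mul_nonneg_right (hR.trans h) hu₀
  calc R ^ α ≤ (u * x) ^ α := Real.rpow_le_rpow hR h (by linarith)
    _ = u ^ α * x ^ α := Real.mul_rpow hu₀.le hx
    _ ≤ u * x ^ α := by
      gcongr
      simpa using Real.rpow_le_rpow_of_exponent_ge hu₀ hu₁ hα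

lemma le_one_add_rpow {x α : ℝ} (hx : 0 ≤ x) (hα : 1 ≤ α) : x ≤ 1 + x ^ α := by
  rcases le_total x 1 with h | h
  · linarith [Real.rpow_nonneg hx α]
  · linarith [Real.self_le_rpow_of_one_le h hα]

lemma norm_sub_le_one_sub_mul {θ : ℝ} (hθ : θ < 1) (x₁ x₂ : E) :
    ‖x₁ - x₂‖ ≤ (1 - θ) * (‖x₂‖ + ‖(1 - θ)⁻¹ • (x₁ - θ • x₂)‖) := by
  have hu : 0 < 1 - θ := sub_pos.2 hθ
  have h : x₁ - x₂ = (1 - θ) • ((1 - θ)⁻¹ • (x₁ - θ • x₂) - x₂) := by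
    rw [smul_sub, smul_inv_smul₀ hu.ne']
    module
  rw [h, norm_smul, Real.norm_of_nonneg hu.le]
  gcongr
  exact (norm_sub_le _ _).trans_eq (add_comm _ _)

lemma rpow_le_one_sub_mul_norm_rpow {α θ R : ℝ} {z₁ z₂ : E} (hα : 1 ≤ α) (hR : 0 ≤ R)
    (hθ : 1 / 2 < θ) (hθ₁ : θ < 1) (hz₁ : ‖z₁‖ ≤ R) (hz₂ : 4 * R < ‖z₂‖) :
    R ^ α ≤ (1 - θ) * ‖(1 - θ)⁻¹ • (z₁ - θ • z₂)‖ ^ α := by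
  have hu : 0 < 1 - θ := sub_pos.2 hθ₁
  apply rpow_le_mul_rpow_of_le_mul hu (by linarith) hα hR
  rw [norm_smul, Real.norm_of_nonneg (inv_nonneg.2 hu.le), mul_inv_cancel_left₀ hu.ne']
  calc R ≤ θ * ‖z₂‖ - ‖z₁‖ := by nlinarith
    _ = ‖θ • z₂‖ - ‖z₁‖ := by rw [norm_smul, Real.norm_of_nonneg (by linarith)]
    _ ≤ ‖z₁ - θ • z₂‖ := by
      rw [norm_sub_rev]
      exact norm_sub_norm_le _ _

lemma mul_abs_sub_le_of_lipschitz_of_support {α θ M K R : ℝ} {q : E → ℝ} (hα : 1 ≤ α)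
    (hR : 0 < R) (hK : 0 ≤ K) (hq_bdd : ∀ z, |q z| ≤ M)
    (hq_lip : ∀ z₁ z₂, |q z₁ - q z₂| ≤ K * ‖z₁ - z₂‖) (hq_supp : ∀ z, R < ‖z‖ → q z = 0)
    (hθ₁ : θ < 1) (z₁ z₂ : E) :
    θ * |q z₁ - q z₂| ≤ (1 - θ) * (2 * M + K * (4 * R + 1)
      + (K + 2 * M / R ^ α) * ‖(1 - θ)⁻¹ • (z₁ - θ • z₂)‖ ^ α) := by
  set D := ‖(1 - θ)⁻¹ • (z₁ - θ • z₂)‖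
  have hu : 0 < 1 - θ := sub_pos.2 hθ₁
  have hM : 0 ≤ M := (abs_nonneg _).trans (hq_bdd z₁)
  have hDα : 0 ≤ D ^ α := by positivity
  have hKR : 0 ≤ K * (4 * R + 1) := by positivity
  have hKD : 0 ≤ K * D ^ α := by positivity
  have hMRD : 0 ≤ 2 * M / R ^ α * D ^ α := by positivity
  have hosc : |q z₁ - q z₂| ≤ 2 * M := (abs_sub _ _).trans (by linarith [hq_bdd z₁, hq_bdd z₂])
  rcases le_or_gt θ (1 / 2) with hθ | hθ
  · calc θ * |q z₁ - q z₂| ≤ (1 - θ) * (2 * M) :=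
          mul_le_mul (by linarith) hosc (abs_nonneg _) hu.le
      _ ≤ _ := mul_le_mul_of_nonneg_left (by linarith) hu.le
  rcases le_or_gt ‖z₂‖ (4 * R) with hz₂ | hz₂
  · calc θ * |q z₁ - q z₂| ≤ K * ‖z₁ - z₂‖ :=
          (mul_le_of_le_one_left (abs_nonneg _) hθ₁.le).trans (hq_lip z₁ z₂)
      _ ≤ K * ((1 - θ) * (4 * R + (1 + D ^ α))) := by
          gcongr
          refine (norm_sub_le_one_sub_mul hθ₁ z₁ z₂).trans ?_
          gcongr
          exact le_one_add_rpow (norm_nonneg _) hα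
      _ = (1 - θ) * (K * (4 * R + 1) + K * D ^ α) := by ring
      _ ≤ _ := mul_le_mul_of_nonneg_left (by linarith) hu.le
  rcases le_or_gt ‖z₁‖ R with hz₁ | hz₁
  · calc θ * |q z₁ - q z₂| ≤ 2 * M := by nlinarith [abs_nonneg (q z₁ - q z₂)]
      _ = 2 * M / R ^ α * R ^ α := (div_mul_cancel₀ _ (by positivity)).symm
      _ ≤ 2 * M / R ^ α * ((1 - θ) * D ^ α) := by
          gcongr
          exact rpow_le_one_sub_mul_norm_rpow hα hR.le hθ hθ₁ hz₁ hz₂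
      _ = (1 - θ) * (2 * M / R ^ α * D ^ α) := by ring
      _ ≤ _ := mul_le_mul_of_nonneg_left (by linarith) hu.le
  · rw [hq_supp z₁ hz₁, hq_supp z₂ (by linarith), sub_self, abs_zero, mul_zero]
    positivity

lemma abs_sub_mul_le_of_lipschitz {θ M K : ℝ} {l : ℝ → ℝ} (hK : 0 ≤ K)
    (hl_bdd : ∀ y, |l y| ≤ M) (hl_lip : ∀ y₁ y₂, |l y₁ - l y₂| ≤ K * |y₁ - y₂|)
    (hθ₁ : θ < 1) (y₁ y₂ : ℝ) :
    |l y₁ - θ * l y₂| ≤ (1 - θ) * (M + K * |y₂| + K * |(y₁ - θ * y₂) / (1 - θ)|) := by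
  have hu : 0 < 1 - θ := sub_pos.2 hθ₁
  have hy : |y₁ - y₂| ≤ (1 - θ) * (|y₂| + |(y₁ - θ * y₂) / (1 - θ)|) := by
    simpa [div_eq_inv_mul] using norm_sub_le_one_sub_mul hθ₁ y₁ y₂
  calc |l y₁ - θ * l y₂| = |(l y₁ - l y₂) + (1 - θ) * l y₂| := by ring_nf
    _ ≤ |l y₁ - l y₂| + (1 - θ) * |l y₂| := by
        refine (abs_add_le _ _).trans_eq ?_
        rw [abs_mul, abs_of_pos hu]
    _ ≤ K * ((1 - θ) * (|y₂| + |(y₁ - θ * y₂) / (1 - θ)|)) + (1 - θ) * M := by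
        gcongr
        exacts [(hl_lip _ _).trans (by gcongr), hl_bdd _]
    _ = _ := by ring

lemma abs_mul_sub_mul_le {α θ Ml Kl Mq Kq R : ℝ} {l : ℝ → ℝ} {q : E → ℝ} (hα : 1 ≤ α)
    (hR : 0 < R) (hKl : 0 ≤ Kl) (hKq : 0 ≤ Kq) (hl_bdd : ∀ y, |l y| ≤ Ml)
    (hl_lip : ∀ y₁ y₂, |l y₁ - l y₂| ≤ Kl * |y₁ - y₂|) (hq_bdd : ∀ z, |q z| ≤ Mq)
    (hq_lip : ∀ z₁ z₂, |q z₁ - q z₂| ≤ Kq * ‖z₁ - z₂‖) (hq_supp : ∀ z, R < ‖z‖ → q z = 0)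
    (hθ₀ : 0 < θ) (hθ₁ : θ < 1) (y₁ y₂ : ℝ) (z₁ z₂ : E) :
    |l y₁ * q z₁ - θ * (l y₂ * q z₂)| ≤ (1 - θ) * (Ml * Mq + Ml * (2 * Mq + Kq * (4 * R + 1))
      + Mq * Kl * |y₂| + Mq * Kl * |(y₁ - θ * y₂) / (1 - θ)|
      + Ml * (Kq + 2 * Mq / R ^ α) * ‖(1 - θ)⁻¹ • (z₁ - θ • z₂)‖ ^ α) := by
  have hMl : 0 ≤ Ml := (abs_nonneg _).trans (hl_bdd 0)
  have hMq : 0 ≤ Mq := (abs_nonneg _).trans (hq_bdd z₁)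
  calc |l y₁ * q z₁ - θ * (l y₂ * q z₂)|
      = |q z₁ * (l y₁ - θ * l y₂) + l y₂ * (θ * (q z₁ - q z₂))| := by ring_nf
    _ ≤ |q z₁| * |l y₁ - θ * l y₂| + |l y₂| * (θ * |q z₁ - q z₂|) := by
        refine (abs_add_le _ _).trans_eq ?_
        rw [abs_mul, abs_mul, abs_mul, abs_of_pos hθ₀]
    _ ≤ Mq * ((1 - θ) * (Ml + Kl * |y₂| + Kl * |(y₁ - θ * y₂) / (1 - θ)|))
        + Ml * ((1 - θ) * (2 * Mq + Kq * (4 * R + 1)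
          + (Kq + 2 * Mq / R ^ α) * ‖(1 - θ)⁻¹ • (z₁ - θ • z₂)‖ ^ α)) := by
        gcongr ?_ * ?_ + ?_ * ?_
        exacts [hq_bdd _, abs_sub_mul_le_of_lipschitz hKl hl_bdd hl_lip hθ₁ y₁ y₂, hl_bdd _,
          mul_abs_sub_le_of_lipschitz_of_support hα hR hKq hq_bdd hq_lip hq_supp hθ₁ z₁ z₂]
    _ = _ := by ring

end

/-- Part (ii) of Proposition 5.1, stated pointwise: a generator of the form
`g(y,z) = l(y) q(z)` with `l` bounded Lipschitz and `q` bounded Lipschitz with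
bounded support satisfies both the (5.1)- and (5.2)-conditions for suitable
nonnegative constants. -/
theorem stmt_14 {d : ℕ}
    (α : ℝ) (hα : α ∈ Set.Ioo (1 : ℝ) 2)
    (l : ℝ → ℝ) (q : EuclideanSpace ℝ (Fin d) → ℝ)
    (Ml Kl Mq Kq R : ℝ) (hR : 0 < R)
    (hl_bdd : ∀ y : ℝ, |l y| ≤ Ml)
    (hl_lip : ∀ y₁ y₂ : ℝ, |l y₁ - l y₂| ≤ Kl * |y₁ - y₂|)
    (hq_bdd : ∀ z : EuclideanSpace ℝ (Fin d), |q z| ≤ Mq)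
    (hq_lip : ∀ z₁ z₂ : EuclideanSpace ℝ (Fin d), |q z₁ - q z₂| ≤ Kq * ‖z₁ - z₂‖)
    (hq_supp : ∀ z : EuclideanSpace ℝ (Fin d), R < ‖z‖ → q z = 0) :
    ∃ F B Γ : ℝ, 0 ≤ F ∧ 0 ≤ B ∧ 0 ≤ Γ ∧
      Cond51 α F B Γ (fun y z => l y * q z) ∧
      Cond52 α F B Γ (fun y z => l y * q z) := by
  have hMl : 0 ≤ Ml := (abs_nonneg _).trans (hl_bdd 0)
  have hMq : 0 ≤ Mq := (abs_nonneg _).trans (hq_bdd 0)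
  have hKl : 0 ≤ Kl := by simpa using (abs_nonneg _).trans (hl_lip 1 0)
  have hq_lip' : ∀ z₁ z₂, |q z₁ - q z₂| ≤ max Kq 0 * ‖z₁ - z₂‖ := fun z₁ z₂ =>
    (hq_lip z₁ z₂).trans (by gcongr; exact le_max_left _ _)
  have key := fun y₁ y₂ z₁ z₂ θ (hθ₀ : 0 < θ) (hθ₁ : θ < 1) =>
    abs_mul_sub_mul_le hα.1.le hR hKl (le_max_right _ _) hl_bdd hl_lip hq_bdd hq_lip' hq_supp
      hθ₀ hθ₁ y₁ y₂ z₁ z₂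
  refine ⟨_, _, _, by positivity, by positivity, by positivity,
    fun y₁ y₂ z₁ z₂ θ hθ₀ hθ₁ _ => (le_abs_self _).trans (key y₁ y₂ z₁ z₂ θ hθ₀ hθ₁),
    fun y₁ y₂ z₁ z₂ θ hθ₀ hθ₁ _ => (neg_le_abs _).trans (key y₁ y₂ z₁ z₂ θ hθ₀ hθ₁)⟩
end
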